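/- arXiv:1107.0177 — 5 statements merged into one kernel-verified Lean document; each statement's English description precedes it below -/
import Mathlib

section
/- Under the hypotheses of the direct sum decomposition, if moreover ‖x₁ + x₂‖ = ‖(‖x₁‖, ‖x₂‖)‖_p for all x₁ ∈ X₁, x₂ ∈ X₂ and some p ∈ [1,∞], then for every ε > 0 the ε-pseudospectrum satisfies spec_ε A = spec_ε A₁ ∪ spec_ε A₂. -/
open scoped ENNReal
/-- The `ε`-pseudospectrum of a bounded operator `B`:
`spec_ε B = spec B ∪ {λ : ‖(B − λI)⁻¹‖ > ε⁻¹}`. -/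
noncomputable def specEps {Y : Type*} [NormedAddCommGroup Y] [NormedSpace ℂ Y]
    (ε : ℝ) (B : Y →L[ℂ] Y) : Set ℂ :=
  spectrum ℂ B ∪ {z : ℂ | ε⁻¹ < ‖Ring.inverse (B - algebraMap ℂ (Y →L[ℂ] Y) z)‖}

/-!
An operator `B` leaving `X₁` and `X₂` invariant acts blockwise on `x = x₁ + x₂`. If `B` is
invertible, `B⁻¹` leaves the summands invariant too: when `B⁻¹ y = x₁ + x₂` with `y ∈ X₁`, the
vector `B x₂ = y - B x₁` lies in `X₁ ∩ X₂ = 0`, so `x₂ = 0`. Conversely, the blockwise inverse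
is bounded because the `p`-norm dominates the norm of each component. Since `‖(a, b)‖_p` is
monotone and homogeneous, an operator acting blockwise has norm `max ‖B₁‖ ‖B₂‖`. Applied to
`B = A - z`, this gives `‖(A - z)⁻¹‖ = max ‖(A₁ - z)⁻¹‖ ‖(A₂ - z)⁻¹‖` off the spectrum, while
`z ∈ spec A` iff `z ∈ spec A₁ ∪ spec A₂`.
-/

theorem WithLp.norm_toLp_le_norm_toLp_of_le (p : ℝ≥0∞) [Fact (1 ≤ p)] {a b c d : ℝ}
    (ha : 0 ≤ a) (hb : 0 ≤ b) (hac : a ≤ c) (hbd : b ≤ d) :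
    ‖toLp p (a, b)‖ ≤ ‖toLp p (c, d)‖ := by
  rcases eq_or_ne p ∞ with rfl | hp
  · simp only [prod_norm_eq_sup, toLp_fst, toLp_snd, Real.norm_eq_abs]
    exact max_le_max (abs_le_abs hac (by linarith)) (abs_le_abs hbd (by linarith))
  · have hp₀ : 0 < p.toReal :=
      ENNReal.toReal_pos (zero_lt_one.trans_le Fact.out).ne' hp
    simp only [prod_norm_eq_add hp₀, toLp_fst, toLp_snd, Real.norm_eq_abs, abs_of_nonneg ha,
      abs_of_nonneg hb, abs_of_nonneg (ha.trans hac), abs_of_nonneg (hb.trans hbd)]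
    gcongr

theorem Submodule.isCompl_of_existsUnique_add {R M : Type*} [Ring R] [AddCommGroup M]
    [Module R M] {X₁ X₂ : Submodule R M}
    (h : ∀ x : M, ∃! q : X₁ × X₂, x = (q.1 : M) + (q.2 : M)) : IsCompl X₁ X₂ := by
  refine ⟨disjoint_def.mpr fun x hx₁ hx₂ => ?_,
    codisjoint_iff.mpr (eq_top_iff.mpr fun x _ => ?_)⟩
  · have := (h x).unique (y₁ := (⟨x, hx₁⟩, 0)) (y₂ := (0, ⟨x, hx₂⟩)) (by simp) (by simp)
    exact congrArg (fun q => (q.1 : M)) this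
  · obtain ⟨q, hq, -⟩ := h x
    exact hq ▸ add_mem_sup q.1.2 q.2.2

section

variable {𝕜 X : Type*} [NontriviallyNormedField 𝕜] [NormedAddCommGroup X] [NormedSpace 𝕜 X]
  {X₁ X₂ : Submodule 𝕜 X}

theorem IsCompl.isTopCompl_of_norm_le_norm_add (h : IsCompl X₁ X₂)
    (hle : ∀ (x₁ : X₁) (x₂ : X₂), ‖(x₁ : X)‖ ≤ ‖(x₁ : X) + x₂‖) : Submodule.IsTopCompl X₁ X₂ := by
  rw [Submodule.IsCompl.isTopCompl_iff_projectionOnto h]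
  refine AddMonoidHomClass.continuous_of_bound _ 1 fun x => ?_
  obtain ⟨x₁, x₂, rfl, -⟩ := Submodule.existsUnique_add_of_isCompl h x
  simpa using hle x₁ x₂

namespace ContinuousLinearMap

def RestrictsTo (B : X →L[𝕜] X) {X₁ : Submodule 𝕜 X} (B₁ : X₁ →L[𝕜] X₁) : Prop :=
  ∀ x : X₁, (B₁ x : X) = B x

namespace RestrictsTo

variable {B C : X →L[𝕜] X} {B₁ C₁ : X₁ →L[𝕜] X₁} {B₂ : X₂ →L[𝕜] X₂}

theorem one : (1 : X →L[𝕜] X).RestrictsTo (1 : X₁ →L[𝕜] X₁) := fun _ => rfl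

theorem mul (hB : B.RestrictsTo B₁) (hC : C.RestrictsTo C₁) : (B * C).RestrictsTo (B₁ * C₁) :=
  fun x => by rw [mul_apply_eq_comp, hB, hC, mul_apply_eq_comp]

theorem sub_algebraMap (hB : B.RestrictsTo B₁) (z : 𝕜) :
    (B - algebraMap 𝕜 _ z).RestrictsTo (B₁ - algebraMap 𝕜 _ z) := fun x => by
  simp [Algebra.algebraMap_eq_smul_one, hB x]

theorem unique (hB : B.RestrictsTo B₁) (hC : B.RestrictsTo C₁) : B₁ = C₁ :=
  ext fun x => Subtype.ext ((hB x).trans (hC x).symm)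

theorem norm_le (hB : B.RestrictsTo B₁) : ‖B₁‖ ≤ ‖B‖ :=
  opNorm_le_bound _ (norm_nonneg _) fun x => by
    show ‖(B₁ x : X)‖ ≤ ‖B‖ * ‖(x : X)‖
    rw [hB]
    exact B.le_opNorm x

theorem eq_of_isCompl (h : IsCompl X₁ X₂) (hB₁ : B.RestrictsTo B₁) (hB₂ : B.RestrictsTo B₂)
    (hC₁ : C.RestrictsTo B₁) (hC₂ : C.RestrictsTo B₂) : B = C := by
  ext x
  obtain ⟨x₁, x₂, rfl, -⟩ := Submodule.existsUnique_add_of_isCompl h x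
  rw [map_add, map_add, ← hB₁, ← hB₂, hC₁, hC₂]

theorem mapsTo_ring_inverse (hB₁ : B.RestrictsTo B₁) (h : IsCompl X₁ X₂)
    (hB₂ : B.RestrictsTo B₂) (hu : IsUnit B) : ∀ y ∈ X₁, Ring.inverse B y ∈ X₁ := by
  intro y hy
  obtain ⟨x₁, x₂, hx, -⟩ := Submodule.existsUnique_add_of_isCompl h (Ring.inverse B y)
  have hBx : (B₁ x₁ : X) + B₂ x₂ = y := by
    rw [hB₁, hB₂, ← map_add, hx, ← mul_apply_eq_comp, Ring.mul_inverse_cancel B hu,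
      one_apply_eq_self]
  have hBx₂ : B x₂ = 0 := by
    rw [← hB₂]
    refine Submodule.disjoint_def.mp h.disjoint _ ?_ (B₂ x₂).2
    rw [eq_sub_of_add_eq' hBx]
    exact X₁.sub_mem hy (B₁ x₁).2
  have hx₂ : (x₂ : X) = 0 := by
    rw [← one_apply_eq_self (F := X →L[𝕜] X) (x₂ : X), ← Ring.inverse_mul_cancel B hu,
      mul_apply_eq_comp, hBx₂, map_zero]
  rw [← hx, hx₂, add_zero]
  exact x₁.2

theorem ring_inverse (hB₁ : B.RestrictsTo B₁) (h : IsCompl X₁ X₂) (hB₂ : B.RestrictsTo B₂)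
    (hu : IsUnit B) : IsUnit B₁ ∧ (Ring.inverse B).RestrictsTo (Ring.inverse B₁) := by
  set C₁ := (Ring.inverse B).restrict (hB₁.mapsTo_ring_inverse h hB₂ hu)
  have hC₁ : (Ring.inverse B).RestrictsTo C₁ := fun _ => rfl
  have hBC : B₁ * C₁ = 1 := (hB₁.mul hC₁).unique (Ring.mul_inverse_cancel B hu ▸ one)
  have hCB : C₁ * B₁ = 1 := (hC₁.mul hB₁).unique (Ring.inverse_mul_cancel B hu ▸ one)
  let u : (X₁ →L[𝕜] X₁)ˣ := ⟨B₁, C₁, hBC, hCB⟩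
  refine ⟨u.isUnit, ?_⟩
  rwa [show B₁ = u from rfl, Ring.inverse_unit]

theorem isUnit_iff (hB₁ : B.RestrictsTo B₁) (h : Submodule.IsTopCompl X₁ X₂)
    (hB₂ : B.RestrictsTo B₂) : IsUnit B ↔ IsUnit B₁ ∧ IsUnit B₂ := by
  refine ⟨fun hu => ⟨(hB₁.ring_inverse h.isCompl hB₂ hu).1,
    (hB₂.ring_inverse h.isCompl.symm hB₁ hu).1⟩, fun ⟨hu₁, hu₂⟩ => ?_⟩
  set C := ofIsTopCompl h (X₁.subtypeL ∘L Ring.inverse B₁) (X₂.subtypeL ∘L Ring.inverse B₂)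
  have hC₁ : C.RestrictsTo (Ring.inverse B₁) := fun x =>
    (ofIsTopCompl_apply_left h (X₁.subtypeL ∘L Ring.inverse B₁) _ x).symm
  have hC₂ : C.RestrictsTo (Ring.inverse B₂) := fun x =>
    (ofIsTopCompl_apply_right h _ (X₂.subtypeL ∘L Ring.inverse B₂) x).symm
  have hBC : B * C = 1 := RestrictsTo.eq_of_isCompl h.isCompl
    (Ring.mul_inverse_cancel B₁ hu₁ ▸ hB₁.mul hC₁) (Ring.mul_inverse_cancel B₂ hu₂ ▸ hB₂.mul hC₂)
    one one
  have hCB : C * B = 1 := RestrictsTo.eq_of_isCompl h.isCompl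
    (Ring.inverse_mul_cancel B₁ hu₁ ▸ hC₁.mul hB₁) (Ring.inverse_mul_cancel B₂ hu₂ ▸ hC₂.mul hB₂)
    one one
  exact ⟨⟨B, C, hBC, hCB⟩, rfl⟩

theorem norm_eq_max (p : ℝ≥0∞) [Fact (1 ≤ p)]
    (hnorm : ∀ (x₁ : X₁) (x₂ : X₂),
      ‖(x₁ : X) + x₂‖ = ‖WithLp.toLp p (‖(x₁ : X)‖, ‖(x₂ : X)‖)‖)
    (h : IsCompl X₁ X₂) (hB₁ : B.RestrictsTo B₁) (hB₂ : B.RestrictsTo B₂) :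
    ‖B‖ = max ‖B₁‖ ‖B₂‖ := by
  set M := max ‖B₁‖ ‖B₂‖
  have hM : 0 ≤ M := le_max_of_le_left (norm_nonneg _)
  refine le_antisymm (opNorm_le_bound _ hM fun x => ?_) (max_le hB₁.norm_le hB₂.norm_le)
  obtain ⟨x₁, x₂, rfl, -⟩ := Submodule.existsUnique_add_of_isCompl h x
  calc ‖B (x₁ + x₂)‖ = ‖WithLp.toLp p (‖B₁ x₁‖, ‖B₂ x₂‖)‖ := by
        rw [map_add, ← hB₁, ← hB₂, hnorm]; rfl
    _ ≤ ‖WithLp.toLp p (M * ‖x₁‖, M * ‖x₂‖)‖ :=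
        WithLp.norm_toLp_le_norm_toLp_of_le p (norm_nonneg _) (norm_nonneg _)
          ((B₁.le_opNorm x₁).trans (by gcongr; exact le_max_left _ _))
          ((B₂.le_opNorm x₂).trans (by gcongr; exact le_max_right _ _))
    _ = M * ‖WithLp.toLp p (‖x₁‖, ‖x₂‖)‖ := by
        rw [← norm_smul_of_nonneg hM (WithLp.toLp p (‖x₁‖, ‖x₂‖)), ← WithLp.toLp_smul]; rfl
    _ = M * ‖(x₁ : X) + x₂‖ := by rw [hnorm]; rfl

end RestrictsTo

end ContinuousLinearMap

end

theorem mem_specEps_iff {Y : Type*} [NormedAddCommGroup Y] [NormedSpace ℂ Y] (ε : ℝ)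
    (B : Y →L[ℂ] Y) (z : ℂ) :
    z ∈ specEps ε B ↔ ¬IsUnit (B - algebraMap ℂ _ z) ∨
      ε⁻¹ < ‖Ring.inverse (B - algebraMap ℂ _ z)‖ := by
  rw [specEps, Set.mem_union, spectrum.mem_iff, IsUnit.sub_iff, Set.mem_ofPred_eq]

theorem specEps_eq_union_of_restrictsTo {X : Type*} [NormedAddCommGroup X] [NormedSpace ℂ X]
    {X₁ X₂ : Submodule ℂ X} (p : ℝ≥0∞) [Fact (1 ≤ p)]
    (hnorm : ∀ (x₁ : X₁) (x₂ : X₂),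
      ‖(x₁ : X) + x₂‖ = ‖WithLp.toLp p (‖(x₁ : X)‖, ‖(x₂ : X)‖)‖)
    (h : IsCompl X₁ X₂) {A : X →L[ℂ] X} {A₁ : X₁ →L[ℂ] X₁} {A₂ : X₂ →L[ℂ] X₂}
    (hA₁ : A.RestrictsTo A₁) (hA₂ : A.RestrictsTo A₂) (ε : ℝ) :
    specEps ε A = specEps ε A₁ ∪ specEps ε A₂ := by
  have hT : Submodule.IsTopCompl X₁ X₂ := h.isTopCompl_of_norm_le_norm_add fun x₁ x₂ => by
    rw [hnorm]
    simpa using WithLp.norm_fst_le ℝ (WithLp.toLp p (‖(x₁ : X)‖, ‖(x₂ : X)‖))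
  ext z
  have hB₁ := hA₁.sub_algebraMap z
  have hB₂ := hA₂.sub_algebraMap z
  rw [Set.mem_union, mem_specEps_iff, mem_specEps_iff, mem_specEps_iff]
  by_cases hu : IsUnit (A - algebraMap ℂ _ z)
  · obtain ⟨hu₁, hC₁⟩ := hB₁.ring_inverse h hB₂ hu
    obtain ⟨hu₂, hC₂⟩ := hB₂.ring_inverse h.symm hB₁ hu
    rw [ContinuousLinearMap.RestrictsTo.norm_eq_max p hnorm h hC₁ hC₂, lt_max_iff]
    tauto
  · have := (hB₁.isUnit_iff hT hB₂).not.mp hu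
    tauto

theorem pseudospectrum_direct_sum_general {X : Type*} [NormedAddCommGroup X] [NormedSpace ℂ X]
    (X₁ X₂ : Submodule ℂ X)
    (hdecomp : ∀ x : X, ∃! q : X₁ × X₂, x = (q.1 : X) + (q.2 : X))
    (A : X →L[ℂ] X) (A₁ : X₁ →L[ℂ] X₁) (A₂ : X₂ →L[ℂ] X₂)
    (hA₁ : ∀ x : X₁, (A₁ x : X) = A (x : X)) (hA₂ : ∀ x : X₂, (A₂ x : X) = A (x : X))
    (p : ℝ≥0∞) [Fact (1 ≤ p)]
    (hnorm : ∀ (x₁ : X₁) (x₂ : X₂),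
      ‖(x₁ : X) + (x₂ : X)‖ = ‖(WithLp.equiv p (ℝ × ℝ)).symm (‖(x₁ : X)‖, ‖(x₂ : X)‖)‖)
    (ε : ℝ) :
    specEps ε A = specEps ε A₁ ∪ specEps ε A₂ :=
  specEps_eq_union_of_restrictsTo p hnorm (Submodule.isCompl_of_existsUnique_add hdecomp)
    hA₁ hA₂ ε

/-- Direct sum `X = X₁ ⊕ X₂` of closed subspaces, with the norm on `X` the `p`-norm
of the pair of norms; then `spec_ε A = spec_ε A₁ ∪ spec_ε A₂` for every `ε > 0`. -/
theorem pseudospectrum_direct_sum {X : Type*} [NormedAddCommGroup X] [NormedSpace ℂ X]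
    [CompleteSpace X] (X₁ X₂ : Submodule ℂ X)
    (hX₁ : IsClosed (X₁ : Set X)) (hX₂ : IsClosed (X₂ : Set X))
    (hdecomp : ∀ x : X, ∃! q : X₁ × X₂, x = (q.1 : X) + (q.2 : X))
    (P₁ : X →L[ℂ] X) (hP₁mem : ∀ x : X, P₁ x ∈ X₁) (hP₁proj : ∀ x ∈ X₁, P₁ x = x)
    (A : X →L[ℂ] X) (A₁ : X₁ →L[ℂ] X₁) (A₂ : X₂ →L[ℂ] X₂)
    (hA₁ : ∀ x : X₁, (A₁ x : X) = A (x : X)) (hA₂ : ∀ x : X₂, (A₂ x : X) = A (x : X))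
    (p : ℝ≥0∞) [Fact (1 ≤ p)]
    (hnorm : ∀ (x₁ : X₁) (x₂ : X₂),
      ‖(x₁ : X) + (x₂ : X)‖ = ‖(WithLp.equiv p (ℝ × ℝ)).symm (‖(x₁ : X)‖, ‖(x₂ : X)‖)‖)
    (ε : ℝ) (hε : 0 < ε) :
    specEps ε A = specEps ε A₁ ∪ specEps ε A₂ :=
  pseudospectrum_direct_sum_general X₁ X₂ hdecomp A A₁ A₂ hA₁ hA₂ p hnorm ε
end

section
/- If b ∈ {±1}^ℤ is 2-periodic but not constant, then the spectrum of A^b on ℓ²(ℤ) equals τ₂ := {x ± ix : −1 ≤ x ≤ 1}, i.e. the set of λ ∈ ℂ with λ² = 2i sin θ for some θ ∈ ℝ. -/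
/-!
Since `b` alternates in sign, `(A^b)² = S² - S*²` for the bilateral shift `(S x)ᵢ = xᵢ₊₁`.
`S` is unitary, and conjugating it by the modulation `xⱼ ↦ wʲ xⱼ` (`|w| = 1`) turns it into `w S`,
so its spectrum is a rotation-invariant nonempty subset of the unit circle, i.e. the whole circle.
The continuous functional calculus then gives `spec (A^b)² = {z² - z̄² : |z| = 1} = {2i sin θ}`.
Finally, conjugation by `xⱼ ↦ (-1)ʲ xⱼ` turns `A^b` into `-A^b`, so `spec A^b` is symmetric and is
therefore the full preimage of `spec (A^b)²` under squaring.
-/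

open scoped lp
open Complex

noncomputable section

theorem SemiconjBy.spectrum_eq {R A : Type*} [CommSemiring R] [Ring A] [Algebra R A]
    {u a b : A} (h : SemiconjBy u a b) (hu : IsUnit u) : spectrum R a = spectrum R b := by
  obtain ⟨u, rfl⟩ := hu
  rw [← spectrum.units_conjugate (u := u) (a := a), h.eq, mul_assoc, u.mul_inv, mul_one]

theorem spectrum_eq_sphere_of_smul_subset {A : Type*} [NormedRing A] [NormedAlgebra ℂ A]
    [CompleteSpace A] [Nontrivial A] {a : A} (hsub : spectrum ℂ a ⊆ Metric.sphere 0 1)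
    (hrot : ∀ z ∈ Metric.sphere (0 : ℂ) 1, spectrum ℂ (z • a) ⊆ spectrum ℂ a) :
    spectrum ℂ a = Metric.sphere 0 1 := by
  refine hsub.antisymm fun ζ hζ => ?_
  obtain ⟨μ, hμ⟩ := spectrum.nonempty a
  have hμ1 : ‖μ‖ = 1 := mem_sphere_zero_iff_norm.mp (hsub hμ)
  have hζ1 : ‖ζ‖ = 1 := mem_sphere_zero_iff_norm.mp hζ
  have hμ0 : μ ≠ 0 := norm_ne_zero_iff.mp (by rw [hμ1]; exact one_ne_zero)
  apply hrot (ζ / μ) (by simp [hζ1, hμ1])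
  rw [spectrum.smul_eq_smul _ _ ⟨μ, hμ⟩]
  exact ⟨μ, hμ, div_mul_cancel₀ ζ hμ0⟩

theorem spectrum_eq_preimage_spectrum_sq {𝕜 A : Type*} [Field 𝕜] [IsAlgClosed 𝕜] [Ring A]
    [Algebra 𝕜 A] {a : A} (hneg : ∀ μ ∈ spectrum 𝕜 a, -μ ∈ spectrum 𝕜 a) :
    spectrum 𝕜 a = (· ^ 2) ⁻¹' spectrum 𝕜 (a ^ 2) := by
  rw [spectrum.map_pow_of_pos a two_pos]
  refine Set.Subset.antisymm (fun μ hμ => ⟨μ, hμ, rfl⟩) ?_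
  rintro μ ⟨ν, hν, hsq⟩
  rcases sq_eq_sq_iff_eq_or_eq_neg.mp hsq.symm with rfl | rfl
  exacts [hν, hneg ν hν]

theorem LinearIsometryEquiv.coe_mem_unitary {𝕜 H : Type*} [RCLike 𝕜] [NormedAddCommGroup H]
    [InnerProductSpace 𝕜 H] [CompleteSpace H] (e : H ≃ₗᵢ[𝕜] H) :
    (e : H →L[𝕜] H) ∈ unitary (H →L[𝕜] H) :=
  (Unitary.linearIsometryEquiv.symm e).prop

section L2

variable {𝕜 ι : Type*} [RCLike 𝕜]

instance [Nonempty ι] : Nontrivial ℓ²(ι, 𝕜) := by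
  obtain ⟨i⟩ := ‹Nonempty ι›
  classical
  refine ⟨lp.single 2 i (1 : 𝕜), 0, fun h => one_ne_zero (α := 𝕜) ?_⟩
  simpa using congrArg (fun x : ℓ²(ι, 𝕜) => x i) h

theorem memℓp_two_comp_equiv (σ : ι ≃ ι) (x : ℓ²(ι, 𝕜)) : Memℓp (x ∘ σ) 2 :=
  memℓp_gen ((σ.summable_iff (f := fun i => ‖x i‖ ^ (2 : ENNReal).toReal)).mpr
    ((lp.memℓp x).summable (by norm_num)))

def l2Reindex (σ : ι ≃ ι) : ℓ²(ι, 𝕜) ≃ₗᵢ[𝕜] ℓ²(ι, 𝕜) where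
  toFun x := ⟨x ∘ σ, memℓp_two_comp_equiv σ x⟩
  invFun x := ⟨x ∘ σ.symm, memℓp_two_comp_equiv σ.symm x⟩
  map_add' _ _ := rfl
  map_smul' _ _ := rfl
  left_inv x := lp.ext <| funext fun i => by simp
  right_inv x := lp.ext <| funext fun i => by simp
  norm_map' x := by
    rw [lp.norm_eq_tsum_rpow (by norm_num), lp.norm_eq_tsum_rpow (by norm_num)]
    exact congrArg (· ^ _) (σ.tsum_eq (fun i => ‖x i‖ ^ (2 : ENNReal).toReal))

@[simp] theorem l2Reindex_apply (σ : ι ≃ ι) (x : ℓ²(ι, 𝕜)) (i : ι) :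
    l2Reindex σ x i = x (σ i) := rfl

@[simp] theorem l2Reindex_symm_apply (σ : ι ≃ ι) (x : ℓ²(ι, 𝕜)) (i : ι) :
    (l2Reindex σ).symm x i = x (σ.symm i) := rfl

theorem memℓp_two_mul_of_norm_eq_one {m : ι → 𝕜} (hm : ∀ i, ‖m i‖ = 1) (x : ℓ²(ι, 𝕜)) :
    Memℓp (fun i => m i * x i) 2 := by
  rw [← memℓp_norm_iff]
  simpa [norm_mul, hm] using memℓp_norm_iff.mpr (lp.memℓp x)

def l2Modulate (m : ι → 𝕜) (hm : ∀ i, ‖m i‖ = 1) : ℓ²(ι, 𝕜) ≃ₗᵢ[𝕜] ℓ²(ι, 𝕜) where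
  toFun x := ⟨fun i => m i * x i, memℓp_two_mul_of_norm_eq_one hm x⟩
  invFun x := ⟨fun i => (m i)⁻¹ * x i, memℓp_two_mul_of_norm_eq_one (by simp [hm]) x⟩
  map_add' x y := lp.ext <| funext fun i => mul_add (m i) (x i) (y i)
  map_smul' c x := lp.ext <| funext fun i => mul_left_comm (m i) c (x i)
  left_inv x := lp.ext <| funext fun i =>
    inv_mul_cancel_left₀ (norm_ne_zero_iff.mp (by simp [hm])) _
  right_inv x := lp.ext <| funext fun i =>
    mul_inv_cancel_left₀ (norm_ne_zero_iff.mp (by simp [hm])) _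
  norm_map' x := by
    rw [← lp.norm_toNorm, ← lp.norm_toNorm (x := x)]
    congr 1
    ext i
    simp [lp.toNorm, norm_mul, hm]

@[simp] theorem l2Modulate_apply (m : ι → 𝕜) (hm : ∀ i, ‖m i‖ = 1) (x : ℓ²(ι, 𝕜)) (i : ι) :
    l2Modulate m hm x i = m i * x i := rfl

end L2

local notation "H" => ℓ²(ℤ, ℂ)

def bilateralShift : H ≃ₗᵢ[ℂ] H := l2Reindex (Equiv.addRight 1)

def modulation (w : ℂ) (hw : ‖w‖ = 1) : H ≃ₗᵢ[ℂ] H :=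
  l2Modulate (fun j : ℤ => w ^ j) fun j => by rw [norm_zpow, hw, one_zpow]

@[simp] theorem bilateralShift_apply (x : H) (i : ℤ) : bilateralShift x i = x (i + 1) := rfl

@[simp] theorem bilateralShift_symm_apply (x : H) (i : ℤ) :
    bilateralShift.symm x i = x (i - 1) := rfl

@[simp] theorem modulation_apply (w : ℂ) (hw : ‖w‖ = 1) (x : H) (i : ℤ) :
    modulation w hw x i = w ^ i * x i := rfl

theorem semiconjBy_modulation_smul_bilateralShift (w : ℂ) (hw : ‖w‖ = 1) :
    SemiconjBy (modulation w hw : H →L[ℂ] H) (w • bilateralShift) bilateralShift := by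
  have hw0 : w ≠ 0 := norm_ne_zero_iff.mp (by rw [hw]; exact one_ne_zero)
  ext x i
  simp [zpow_add_one₀ hw0, mul_assoc, mul_left_comm]

theorem spectrum_bilateralShift :
    spectrum ℂ (bilateralShift : H →L[ℂ] H) = Metric.sphere 0 1 :=
  spectrum_eq_sphere_of_smul_subset
    (spectrum.subset_circle_of_unitary bilateralShift.coe_mem_unitary) fun w hw =>
      ((semiconjBy_modulation_smul_bilateralShift w (mem_sphere_zero_iff_norm.mp hw)).spectrum_eq
        (modulation w _).toContinuousLinearEquiv.toUnit.isUnit).subset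

theorem image_sphere_sq_sub_star_sq : (fun z : ℂ => z ^ 2 - star z ^ 2) '' Metric.sphere 0 1
    = {μ | ∃ θ : ℝ, μ = 2 * I * Real.sin θ} := by
  have key : ∀ α : ℝ, exp (α * I) ^ 2 - star (exp (α * I)) ^ 2 = 2 * I * Real.sin (2 * α) := by
    intro α
    rw [star_def, ← exp_conj, map_mul, conj_ofReal, conj_I, ← exp_nat_mul, ← exp_nat_mul,
      ofReal_sin, Complex.sin]
    push_cast
    ring_nf
    rw [I_sq]
    ring_nf
  ext μ
  simp only [Set.mem_image, mem_sphere_zero_iff_norm, norm_eq_one_iff, Set.mem_ofPred_eq]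
  constructor
  · rintro ⟨_, ⟨α, rfl⟩, rfl⟩
    exact ⟨2 * α, key α⟩
  · rintro ⟨θ, rfl⟩
    exact ⟨_, ⟨θ / 2, rfl⟩, by rw [key, mul_div_cancel₀ θ two_ne_zero]⟩

theorem spectrum_bilateralShift_sq_sub_star_sq :
    spectrum ℂ ((bilateralShift : H →L[ℂ] H) ^ 2 - star (bilateralShift : H →L[ℂ] H) ^ 2)
      = {μ | ∃ θ : ℝ, μ = 2 * I * Real.sin θ} := by
  have : IsStarNormal (bilateralShift : H →L[ℂ] H) :=
    isStarNormal_of_mem_unitary bilateralShift.coe_mem_unitary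
  have hcfc : cfc (fun z : ℂ => z ^ 2 - star z ^ 2) (bilateralShift : H →L[ℂ] H)
      = (bilateralShift : H →L[ℂ] H) ^ 2 - star (bilateralShift : H →L[ℂ] H) ^ 2 := by
    simp_rw [← star_pow]
    rw [cfc_sub .., cfc_star .., cfc_pow .., cfc_id' ..]
  rw [← hcfc, cfc_map_spectrum .., spectrum_bilateralShift, image_sphere_sq_sub_star_sq]

theorem Function.Periodic.antiperiodic_one_of_sq_eq_one {R : Type*} [CommRing R]
    [NoZeroDivisors R] {b : ℤ → R} (hper : Function.Periodic b 2) (hne : ∃ j, b j ≠ b 0)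
    (hsq : ∀ j, b j ^ 2 = 1) : Function.Antiperiodic b 1 := by
  have hmod : ∀ j, b j = b (j % 2) := fun j => by
    rw [Int.emod_def, mul_comm]
    exact (hper.sub_int_mul_eq (j / 2)).symm
  have h10 : b 1 = -b 0 := by
    obtain ⟨j, hj⟩ := hne
    have h1 : b 1 ≠ b 0 := by
      rcases Int.emod_two_eq j with h | h <;> rw [hmod j, h] at hj
      exacts [absurd rfl hj, hj]
    exact (sq_eq_sq_iff_eq_or_eq_neg.mp ((hsq 1).trans (hsq 0).symm)).resolve_left h1
  intro j
  rcases Int.emod_two_eq j with h | h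
  <;> rw [hmod j, hmod (j + 1), Int.add_emod, h] <;> norm_num [h10]

section NearestNeighbour

variable {b : ℤ → ℂ} {A : H →L[ℂ] H}

theorem sq_eq_bilateralShift_sq_sub_star_sq (hb : Function.Antiperiodic b 1)
    (hsq : ∀ j, b j ^ 2 = 1) (hA : ∀ (x : H) (i : ℤ), A x i = b (i - 1) * x (i - 1) + x (i + 1)) :
    A ^ 2 = (bilateralShift : H →L[ℂ] H) ^ 2 - star (bilateralShift : H →L[ℂ] H) ^ 2 := by
  ext x i
  have h1 : b (i - 1) = -b (i - 2) := by simpa [show i - 2 + 1 = i - 1 by ring] using hb (i - 2)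
  have h2 : b i = -b (i - 1) := by simpa using hb (i - 1)
  calc (A ^ 2) x i = b (i - 1) * (b (i - 2) * x (i - 2) + x i) + (b i * x i + x (i + 2)) := by
        simp [pow_two, hA, sub_sub, add_assoc]
    _ = x (i + 2) - x (i - 2) := by
        linear_combination (x (i - 2) * b (i - 2)) * h1 - x (i - 2) * hsq (i - 2) + x i * h2
    _ = _ := by simp [pow_two, sub_sub, add_assoc]

theorem neg_mem_spectrum_of_apply_eq
    (hA : ∀ (x : H) (i : ℤ), A x i = b (i - 1) * x (i - 1) + x (i + 1))
    {μ : ℂ} (hμ : μ ∈ spectrum ℂ A) : -μ ∈ spectrum ℂ A := by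
  have hD : SemiconjBy (modulation (-1) (by simp) : H →L[ℂ] H) (-A) A := by
    ext x i
    simp [hA, zpow_sub_one₀, zpow_add_one₀, mul_add, mul_left_comm, add_comm]
  rwa [← hD.spectrum_eq (modulation _ _).toContinuousLinearEquiv.toUnit.isUnit,
    ← spectrum.neg_eq, Set.neg_mem_neg]

end NearestNeighbour

end

/-- For `2`-periodic non-constant `b ∈ {±1}^ℤ`, the spectrum of `A^b` on `ℓ²(ℤ)` is
`τ₂ = {λ ∈ ℂ : λ² = 2i sin θ for some θ ∈ ℝ}`. -/
theorem spectrum_two_periodic (b : ℤ → ℂ)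
    (hper : ∀ j : ℤ, b (j + 2) = b j) (hnotconst : ∃ j : ℤ, b j ≠ b 0)
    (hpm : ∀ j : ℤ, b j = 1 ∨ b j = -1)
    (A : lp (fun _ : ℤ => ℂ) 2 →L[ℂ] lp (fun _ : ℤ => ℂ) 2)
    (hA : ∀ (x : lp (fun _ : ℤ => ℂ) 2) (i : ℤ),
      (A x : ∀ _ : ℤ, ℂ) i = b (i - 1) * (x : ∀ _ : ℤ, ℂ) (i - 1) + (x : ∀ _ : ℤ, ℂ) (i + 1)) :
    spectrum ℂ A = {lam : ℂ | ∃ θ : ℝ, lam ^ 2 = 2 * Complex.I * (Real.sin θ : ℂ)} := by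
  have hsq : ∀ j, b j ^ 2 = 1 := fun j => by rcases hpm j with h | h <;> simp [h]
  have hb : Function.Antiperiodic b 1 :=
    Function.Periodic.antiperiodic_one_of_sq_eq_one hper hnotconst hsq
  rw [spectrum_eq_preimage_spectrum_sq fun μ => neg_mem_spectrum_of_apply_eq hA,
    sq_eq_bilateralShift_sq_sub_star_sq hb hsq hA, spectrum_bilateralShift_sq_sub_star_sq]
  rfl
end

section
/- The set {λ = x + iy ∈ ℂ : λ³ − λ = −2i sin θ for some θ ∈ ℝ} equals i[−1,1] ∪ {x + iy : −1/2 ≤ y ≤ 1/2, x² = 1 + 3y²}. -/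
/-!
Writing `λ = x + iy`, we have `Re(λ³ − λ) = x (x² − 3y² − 1)` and `Im(λ³ − λ) = y (3x² − y² − 1)`.
On the branch `x = 0` the imaginary part is `−(y³ + y)`, and on the branch `x² = 1 + 3y²` it is
`u³ + u` with `u = 2y`. Since `u ↦ u³ + u` is odd and strictly increasing with value `2` at `1`,
the condition `Im(λ³ − λ) ∈ [−2, 2]` becomes `y ∈ [−1, 1]`, respectively `2y ∈ [−1, 1]`.
-/

open Complex Set

section CubeAddSelf

variable {R : Type*} [Ring R] [LinearOrder R] [IsStrictOrderedRing R] [ExistsAddOfLE R]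

theorem strictMono_cube_add_self : StrictMono fun y : R => y ^ 3 + y :=
  (Odd.strictMono_pow (by decide)).add_monotone monotone_id

theorem cube_add_self_mem_Icc_iff (y : R) : y ^ 3 + y ∈ Icc (-2) 2 ↔ y ∈ Icc (-1) 1 := by
  have hf := strictMono_cube_add_self (R := R)
  have hneg : (-1 : R) ^ 3 + -1 = -2 := by norm_num
  have hpos : (1 : R) ^ 3 + 1 = 2 := by norm_num
  rw [mem_Icc, mem_Icc, ← hneg, ← hpos, hf.le_iff_le, hf.le_iff_le]

end CubeAddSelf

theorem Complex.re_cube_sub_self (z : ℂ) :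
    (z ^ 3 - z).re = z.re * (z.re ^ 2 - 3 * z.im ^ 2 - 1) := by
  simp only [pow_succ, pow_zero, one_mul, sub_re, mul_re, mul_im]
  ring

theorem Complex.im_cube_sub_self (z : ℂ) :
    (z ^ 3 - z).im = z.im * (3 * z.re ^ 2 - z.im ^ 2 - 1) := by
  simp only [pow_succ, pow_zero, one_mul, sub_im, mul_re, mul_im]
  ring

theorem Complex.exists_eq_neg_two_I_mul_sin_iff (w : ℂ) :
    (∃ θ : ℝ, w = -2 * I * (Real.sin θ : ℂ)) ↔ w.re = 0 ∧ w.im ∈ Icc (-2) 2 := by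
  constructor
  · rintro ⟨θ, rfl⟩
    simp only [neg_mul, neg_re, neg_im, mul_re, mul_im, re_ofNat, im_ofNat, I_re, I_im,
      ofReal_re, ofReal_im]
    constructor
    · ring
    · constructor <;> nlinarith [Real.sin_le_one θ, Real.neg_one_le_sin θ]
  · rintro ⟨hre, him⟩
    obtain ⟨θ, hθ⟩ : -(w.im / 2) ∈ range Real.sin := by
      rw [Real.range_sin, mem_Icc] at *
      constructor <;> linarith [him.1, him.2]
    refine ⟨θ, Complex.ext (by simp [hre]) ?_⟩
    simp only [hθ, neg_mul, neg_im, mul_im, re_ofNat, im_ofNat, I_re, I_im, ofReal_re, ofReal_im]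
    ring

theorem Complex.image_ofReal_mul_I (s : Set ℝ) :
    (fun y : ℝ => (y : ℂ) * I) '' s = {z : ℂ | z.re = 0 ∧ z.im ∈ s} := by
  ext z
  constructor
  · rintro ⟨y, hy, rfl⟩
    simpa using hy
  · rintro ⟨hre, him⟩
    exact ⟨z.im, him, Complex.ext (by simp [hre]) (by simp)⟩

/-- `{λ ∈ ℂ : λ³ − λ = −2i sin θ for some θ ∈ ℝ}` equals
`i[−1,1] ∪ {x + iy : −1/2 ≤ y ≤ 1/2, x² = 1 + 3y²}`. -/
theorem cube_sub_self_eq_neg_two_I_sin_iff :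
    {lam : ℂ | ∃ θ : ℝ, lam ^ 3 - lam = -2 * Complex.I * (Real.sin θ : ℂ)} =
      (fun y : ℝ => (y : ℂ) * Complex.I) '' Set.Icc (-1 : ℝ) 1 ∪
        {lam : ℂ | -(1 / 2) ≤ lam.im ∧ lam.im ≤ 1 / 2 ∧ lam.re ^ 2 = 1 + 3 * lam.im ^ 2} := by
  ext z
  rw [image_ofReal_mul_I]
  simp only [mem_ofPred_eq, mem_union, exists_eq_neg_two_I_mul_sin_iff, re_cube_sub_self,
    im_cube_sub_self, mul_eq_zero, or_and_right]
  set x := z.re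
  set y := z.im
  refine or_congr (and_congr_right fun hx => ?_) ?_
  · rw [hx, show y * (3 * 0 ^ 2 - y ^ 2 - 1) = -(y ^ 3 + y) by ring, neg_mem_Icc_iff, neg_neg]
    exact cube_add_self_mem_Icc_iff y
  · have hcurve : x ^ 2 - 3 * y ^ 2 - 1 = 0 ↔ x ^ 2 = 1 + 3 * y ^ 2 := by
      constructor <;> intro h <;> linarith
    have hhalf : 2 * y ∈ Icc (-1) 1 ↔ -(1 / 2) ≤ y ∧ y ≤ 1 / 2 := by
      simp only [mem_Icc]
      constructor <;> rintro ⟨h₁, h₂⟩ <;> constructor <;> linarith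
    rw [hcurve, ← and_assoc, and_comm]
    refine and_congr_left fun hx2 => ?_
    rw [← hhalf, ← cube_add_self_mem_Icc_iff, show y * (3 * x ^ 2 - y ^ 2 - 1) = (2 * y) ^ 3 + 2 * y by linear_combination 3 * y * hx2]
end

section
/- Let b ∈ {±1}^ℤ with b_k = 1 for k ≤ 0, c = Rb (c_k = b_{−1−k}), and let A_o^{b,c} be the restriction of A^{b,c} to the odd sequences in ℓ^p(ℤ). Then A_o^{b,c} = E A_+^b P, where E : ℓ^p(ℕ) → ℓ_o^p(ℤ) is the odd extension and P the restriction; consequently spec A_+^b = spec A_o^{b,c} ⊆ spec A^{b,c}. -/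
/-!
Index `n` of `ℓ^p(ℕ)` stands for the paper's index `n + 1`. Since `c = Rb`, the operator `A`
commutes with the reflection `g ↦ -g(-·)`, and since moreover `b_k = 1` for `k ≤ 0`, it acts on odd
sequences as `A₊` acts on their positive halves. With the odd part
`(P g)ₙ = (g (n + 1) - g (-(n + 1))) / 2`, which is the restriction on odd sequences, this reads
`P E = 1`, `A E = E A₊` and `P A = A₊ P`. So if `z - A` is invertible, `z - A₊` is bijective with
inverse `P (z - A)⁻¹ E`, hence invertible by the open mapping theorem.
-/

open scoped ENNReal
open Function

theorem Function.Bijective.of_semiconj_of_leftInverse {α β : Type*} {E : α → β} {P : β → α}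
    {S : α → α} {T : β → β} (hPE : LeftInverse P E) (hTE : Semiconj E S T)
    (hPT : Semiconj P T S) (hT : Bijective T) : Bijective S := by
  refine ⟨fun x₁ x₂ h => hPE.injective (hT.injective ?_), fun y => ?_⟩
  · rw [← hTE, ← hTE, h]
  · obtain ⟨z, hz⟩ := hT.surjective (E y)
    exact ⟨P z, by rw [← hPT, hz, hPE]⟩

theorem ContinuousLinearMap.spectrum_subset_of_semiconj_of_leftInverse {𝕜 X Y : Type*}
    [NontriviallyNormedField 𝕜] [NormedAddCommGroup X] [NormedSpace 𝕜 X] [CompleteSpace X]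
    [NormedAddCommGroup Y] [NormedSpace 𝕜 Y] {S : X →L[𝕜] X} {T : Y →L[𝕜] Y}
    (E : X →ₗ[𝕜] Y) (P : Y →ₗ[𝕜] X) (hPE : LeftInverse P E) (hTE : Semiconj E S T)
    (hPT : Semiconj P T S) : spectrum 𝕜 S ⊆ spectrum 𝕜 T := by
  intro z hzS
  contrapose! hzS
  rw [spectrum.notMem_iff] at hzS ⊢
  rw [isUnit_iff_bijective]
  refine .of_semiconj_of_leftInverse hPE (fun x => ?_) (fun y => ?_)
    ((Module.End.isUnit_iff _).mp (hzS.map toLinearMapRingHom))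
  · simp [hTE x]
  · simp [hPT y]

section Memℓp

variable {α β E : Type*} [NormedAddCommGroup E] {p : ℝ≥0∞}

theorem Memℓp.comp_injective {f : β → E} (hf : Memℓp f p) {e : α → β} (he : Injective e) :
    Memℓp (f ∘ e) p := by
  obtain (rfl | rfl | hp) := p.trichotomy
  · exact memℓp_zero (hf.finite_dsupport.preimage he.injOn)
  · exact memℓp_infty (hf.bddAbove.mono (Set.range_comp_subset_range e (‖f ·‖)))
  · exact memℓp_gen ((hf.summable hp).comp_injective he)

theorem Memℓp.extend_zero {f : α → E} (hf : Memℓp f p) {e : α → β} (he : Injective e) :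
    Memℓp (extend e f 0) p := by
  have off_range (k : β) (h : ¬∃ a, e a = k) : extend e f 0 k = 0 :=
    extend_apply' f (0 : β → E) k h
  obtain (rfl | rfl | hp) := p.trichotomy
  · refine memℓp_zero ((hf.finite_dsupport.image e).subset ?_)
    intro k hk
    by_cases h : ∃ a, e a = k
    · obtain ⟨a, rfl⟩ := h
      exact ⟨a, by simpa [he.extend_apply] using hk, rfl⟩
    · exact absurd (off_range k h) hk
  · refine memℓp_infty ((hf.bddAbove.insert 0).mono ?_)
    rintro - ⟨k, rfl⟩
    by_cases h : ∃ a, e a = k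
    · obtain ⟨a, rfl⟩ := h
      exact .inr ⟨a, by simp [he.extend_apply]⟩
    · exact .inl (by simp [off_range k h])
  · refine memℓp_gen ((he.summable_iff fun k h => ?_).mp ?_)
    · simp [off_range k h, Real.zero_rpow hp.ne']
    · simpa [comp_def, he.extend_apply] using hf.summable hp

end Memℓp

theorem Int.natCast_add_one_injective : Injective (fun n : ℕ => (n + 1 : ℤ)) :=
  (add_left_injective 1).comp Nat.cast_injective

section OddExtension

variable {E : Type*} [AddGroup E]

def oddExt (f : ℕ → E) : ℤ → E
  | 0 => 0
  | (n + 1 : ℕ) => f n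
  | .negSucc n => -f n

@[simp] theorem oddExt_zero (f : ℕ → E) : oddExt f 0 = 0 := rfl

@[simp] theorem oddExt_natCast_add_one (f : ℕ → E) (n : ℕ) : oddExt f (n + 1) = f n := rfl

theorem oddExt_neg_natCast_add_one (f : ℕ → E) (n : ℕ) : oddExt f (-(n + 1)) = -f n := rfl

theorem oddExt_natCast (f : ℕ → E) (n : ℕ) : oddExt f n = if n = 0 then 0 else f (n - 1) := by
  cases n <;> simp

theorem oddExt_neg (f : ℕ → E) (k : ℤ) : oddExt f (-k) = -oddExt f k := by
  rcases k with (_ | n) | n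
  · simp
  · exact oddExt_neg_natCast_add_one f n
  · rw [Int.negSucc_eq, neg_neg, oddExt_natCast_add_one, oddExt_neg_natCast_add_one, neg_neg]

theorem oddExt_eq_sub (f : ℕ → E) :
    oddExt f = fun k => extend (fun n : ℕ => (n + 1 : ℤ)) f 0 k
      - extend (fun n : ℕ => (n + 1 : ℤ)) f 0 (-k) := by
  have on_range := Int.natCast_add_one_injective.extend_apply f 0
  have off_range (k : ℤ) (hk : k ≤ 0) : extend (fun n : ℕ => (n + 1 : ℤ)) f 0 k = 0 :=
    extend_apply' f (0 : ℤ → E) k (by omega)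
  funext k
  rcases k with (_ | n) | n
  · simp [off_range]
  · simp only [Int.ofNat_eq_natCast, Nat.cast_add, Nat.cast_one, oddExt_natCast_add_one,
      on_range n, off_range (-(n + 1)) (by omega), sub_zero]
  · rw [Int.negSucc_eq, oddExt_neg_natCast_add_one, neg_neg, on_range n,
      off_range (-(n + 1)) (by omega), zero_sub]

theorem oddExt_add {M : Type*} [AddCommGroup M] (f g : ℕ → M) :
    oddExt (f + g) = oddExt f + oddExt g := by
  funext k
  rcases k with (_ | n) | n
  · simp
  · rfl
  · exact neg_add _ _

theorem oddExt_smul {R : Type*} [Monoid R] [DistribMulAction R E] (c : R) (f : ℕ → E) :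
    oddExt (c • f) = c • oddExt f := by
  funext k
  rcases k with (_ | n) | n
  · simp
  · rfl
  · exact (smul_neg c (f n)).symm

end OddExtension

section Operators

variable {R : Type*} [CommRing R]

def biinfiniteOp (b c x : ℤ → R) (i : ℤ) : R := b (i - 1) * x (i - 1) + c i * x (i + 1)

def semiinfiniteOp (b : ℤ → R) (x : ℕ → R) (n : ℕ) : R :=
  (if n = 0 then 0 else b n * x (n - 1)) + x (n + 1)

theorem biinfiniteOp_oddExt {b c : ℤ → R} (hb : ∀ k ≤ 0, b k = 1) (hc : ∀ k, c k = b (-1 - k))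
    (x : ℕ → R) : biinfiniteOp b c (oddExt x) = oddExt (semiinfiniteOp b x) := by
  funext i
  rcases i with (_ | n) | n
  · show b (0 - 1) * oddExt x (-((0 : ℕ) + 1)) + c 0 * oddExt x ((0 : ℕ) + 1) = 0
    rw [hc, oddExt_neg_natCast_add_one, oddExt_natCast_add_one, zero_sub, sub_zero]
    ring
  · show b (n + 1 - 1) * oddExt x (n + 1 - 1) + c (n + 1) * oddExt x ((n + 1 : ℕ) + 1)
      = semiinfiniteOp b x n
    rw [add_sub_cancel_right, hc, hb (-1 - (n + 1)) (by omega), oddExt_natCast,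
      oddExt_natCast_add_one, semiinfiniteOp, mul_ite, mul_zero, one_mul]
  · show b (-(n + 1) - 1) * oddExt x (-((n + 1 : ℕ) + 1))
        + c (-(n + 1)) * oddExt x (-(n + 1) + 1) = -semiinfiniteOp b x n
    rw [hb (-(n + 1) - 1) (by omega), hc, show -1 - -((n : ℤ) + 1) = n by ring,
      show -((n : ℤ) + 1) + 1 = -n by ring, oddExt_neg_natCast_add_one, oddExt_neg,
      oddExt_natCast, semiinfiniteOp, mul_neg, mul_neg, mul_ite, mul_zero, one_mul, neg_add,
      add_comm]

end Operators

section OddPart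

variable {K : Type*} [Field K]

def oddPart (g : ℤ → K) (n : ℕ) : K := (g (n + 1) - g (-(n + 1))) / 2

theorem oddPart_oddExt [NeZero (2 : K)] (x : ℕ → K) : oddPart (oddExt x) = x := by
  funext n
  rw [oddPart, oddExt_natCast_add_one, oddExt_neg_natCast_add_one, sub_neg_eq_add, ← two_mul,
    mul_div_cancel_left₀ _ two_ne_zero]

theorem oddPart_biinfiniteOp {b c : ℤ → K} (hb : ∀ k ≤ 0, b k = 1) (hc : ∀ k, c k = b (-1 - k))
    (g : ℤ → K) : oddPart (biinfiniteOp b c g) = semiinfiniteOp b (oddPart g) := by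
  funext n
  simp only [oddPart, biinfiniteOp, semiinfiniteOp, hc]
  rw [hb (-(n + 1) - 1) (by omega), hb (-1 - (n + 1)) (by omega),
    show -1 - -((n : ℤ) + 1) = n by ring, add_sub_cancel_right,
    show -((n : ℤ) + 1) + 1 = -n by ring]
  split_ifs with hn
  · subst hn
    push_cast
    ring_nf
  · rw [Nat.cast_sub (Nat.one_le_iff_ne_zero.mpr hn)]
    push_cast
    ring_nf

theorem oddPart_add (g h : ℤ → K) : oddPart (g + h) = oddPart g + oddPart h := by
  funext n
  simp only [oddPart, Pi.add_apply]
  ring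

theorem oddPart_smul (c : K) (g : ℤ → K) : oddPart (c • g) = c • oddPart g := by
  funext n
  simp only [oddPart, Pi.smul_apply, smul_eq_mul]
  ring

end OddPart

section lp

theorem Memℓp.oddExt {p : ℝ≥0∞} {E : Type*} [NormedAddCommGroup E] {f : ℕ → E} (hf : Memℓp f p) :
    Memℓp (_root_.oddExt f) p := by
  rw [oddExt_eq_sub]
  exact (hf.extend_zero Int.natCast_add_one_injective).sub
    ((hf.extend_zero Int.natCast_add_one_injective).comp_injective neg_injective)

theorem Memℓp.oddPart {p : ℝ≥0∞} {K : Type*} [NormedField K] {g : ℤ → K} (hg : Memℓp g p) :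
    Memℓp (_root_.oddPart g) p := by
  have := ((hg.comp_injective Int.natCast_add_one_injective).sub
    (hg.comp_injective (neg_injective.comp Int.natCast_add_one_injective))).const_mul (2⁻¹ : K)
  convert this using 2 with n
  rw [_root_.oddPart, div_eq_inv_mul]
  rfl

variable (K : Type*) [NormedField K] (p : ℝ≥0∞)

def oddExtₗ : lp (fun _ : ℕ => K) p →ₗ[K] lp (fun _ : ℤ => K) p where
  toFun x := ⟨oddExt x, (lp.memℓp x).oddExt⟩
  map_add' x y := lp.ext (oddExt_add x y)
  map_smul' c x := lp.ext (oddExt_smul c x)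

def oddPartₗ : lp (fun _ : ℤ => K) p →ₗ[K] lp (fun _ : ℕ => K) p where
  toFun g := ⟨oddPart g, (lp.memℓp g).oddPart⟩
  map_add' g h := lp.ext (oddPart_add g h)
  map_smul' c g := lp.ext (oddPart_smul c g)

@[simp] theorem coe_oddExtₗ (x : lp (fun _ : ℕ => K) p) : ⇑(oddExtₗ K p x) = oddExt x := rfl

@[simp] theorem coe_oddPartₗ (g : lp (fun _ : ℤ => K) p) : ⇑(oddPartₗ K p g) = oddPart g :=
  rfl

end lp

theorem spectrum_semiinfinite_subset_biinfinite_general (p : ℝ≥0∞) [Fact (1 ≤ p)] (b c : ℤ → ℂ)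
    (hb1 : ∀ k : ℤ, k ≤ 0 → b k = 1)
    (hc : ∀ k : ℤ, c k = b (-1 - k))
    (A : lp (fun _ : ℤ => ℂ) p →L[ℂ] lp (fun _ : ℤ => ℂ) p)
    (hA : ∀ (x : lp (fun _ : ℤ => ℂ) p) (i : ℤ),
      (A x : ∀ _ : ℤ, ℂ) i = b (i - 1) * (x : ∀ _ : ℤ, ℂ) (i - 1)
        + c i * (x : ∀ _ : ℤ, ℂ) (i + 1))
    (Aplus : lp (fun _ : ℕ => ℂ) p →L[ℂ] lp (fun _ : ℕ => ℂ) p)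
    (hAplus : ∀ (x : lp (fun _ : ℕ => ℂ) p) (n : ℕ),
      (Aplus x : ∀ _ : ℕ, ℂ) n =
        (if n = 0 then 0 else b (n : ℤ) * (x : ∀ _ : ℕ, ℂ) (n - 1))
          + (x : ∀ _ : ℕ, ℂ) (n + 1)) :
    spectrum ℂ Aplus ⊆ spectrum ℂ A := by
  have hA' (x : lp (fun _ : ℤ => ℂ) p) : ⇑(A x) = biinfiniteOp b c x := funext (hA x)
  have hAplus' (x : lp (fun _ : ℕ => ℂ) p) : ⇑(Aplus x) = semiinfiniteOp b x :=
    funext (hAplus x)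
  refine ContinuousLinearMap.spectrum_subset_of_semiconj_of_leftInverse (oddExtₗ ℂ p)
    (oddPartₗ ℂ p) (fun x => lp.ext ?_) (fun x => lp.ext ?_) (fun g => lp.ext ?_)
  · exact oddPart_oddExt x
  · rw [coe_oddExtₗ, hAplus', hA', coe_oddExtₗ, biinfiniteOp_oddExt hb1 hc]
  · rw [coe_oddPartₗ, hA', hAplus', coe_oddPartₗ, oddPart_biinfiniteOp hb1 hc]

/-- Let `b ∈ {±1}^ℤ` with `b_k = 1` for `k ≤ 0`, and `c = Rb` (`c_k = b_{−1−k}`).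
The restriction of `A^{b,c}` to the odd sequences is unitarily equivalent (via the
odd extension `E` and restriction `P`) to the semi-infinite operator `A_+^b`;
consequently `spec A_+^b ⊆ spec A^{b,c}`. -/
theorem spectrum_semiinfinite_subset_biinfinite (p : ℝ≥0∞) [Fact (1 ≤ p)] (b c : ℤ → ℂ)
    (hb1 : ∀ k : ℤ, k ≤ 0 → b k = 1) (hbpm : ∀ k : ℤ, b k = 1 ∨ b k = -1)
    (hc : ∀ k : ℤ, c k = b (-1 - k))
    (A : lp (fun _ : ℤ => ℂ) p →L[ℂ] lp (fun _ : ℤ => ℂ) p)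
    (hA : ∀ (x : lp (fun _ : ℤ => ℂ) p) (i : ℤ),
      (A x : ∀ _ : ℤ, ℂ) i = b (i - 1) * (x : ∀ _ : ℤ, ℂ) (i - 1)
        + c i * (x : ∀ _ : ℤ, ℂ) (i + 1))
    (Aplus : lp (fun _ : ℕ => ℂ) p →L[ℂ] lp (fun _ : ℕ => ℂ) p)
    (hAplus : ∀ (x : lp (fun _ : ℕ => ℂ) p) (n : ℕ),
      (Aplus x : ∀ _ : ℕ, ℂ) n =
        (if n = 0 then 0 else b (n : ℤ) * (x : ∀ _ : ℕ, ℂ) (n - 1))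
          + (x : ∀ _ : ℕ, ℂ) (n + 1)) :
    spectrum ℂ Aplus ⊆ spectrum ℂ A :=
  spectrum_semiinfinite_subset_biinfinite_general p b c hb1 hc A hA Aplus hAplus
end

section
/- For any b ∈ {±1}^ℤ, the numerical range of A^b on ℓ²(ℤ) is contained in the open square Δ = {x + iy : x, y ∈ ℝ, |x| + |y| < 2}. -/
/-!
Writing `a k = conj (x k) * x (k + 1)`, the quadratic form is `⟪A x, x⟫ = ∑ (b k * a k + conj (a k))`.
For `b k = 1` the summand is the real number `2 Re (a k)`, for `b k = -1` the imaginary number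
`-2i Im (a k)`; either way it contributes at most `2 ‖a k‖` to `|Re| + |Im|`. Hence
`|Re ⟪A x, x⟫| + |Im ⟪A x, x⟫| ≤ ∑ 2 ‖x k‖ ‖x (k + 1)‖ ≤ ∑ (‖x k‖² + ‖x (k + 1)‖²) = 2`, and the second
inequality is strict because `k ↦ ‖x k‖` is square-summable and nonzero, so not constant.
-/

open ComplexConjugate

section ShiftedProducts

variable {f : ℤ → ℝ}

lemma summable_sq_int_add_one (hf : Summable fun k => f k ^ 2) :
    Summable fun k => f (k + 1) ^ 2 :=
  (Equiv.addRight (1 : ℤ)).summable_iff.2 hf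

lemma summable_mul_int_add_one (hf : Summable fun k => f k ^ 2) :
    Summable fun k => f k * f (k + 1) := by
  refine Summable.of_norm_bounded ((hf.add (summable_sq_int_add_one hf)).div_const 2) fun k => ?_
  rw [Real.norm_eq_abs, abs_mul]
  nlinarith [two_mul_le_add_sq |f k| |f (k + 1)|, sq_abs (f k), sq_abs (f (k + 1))]

lemma exists_ne_int_add_one (hf : Summable fun k => f k ^ 2) (h0 : f ≠ 0) :
    ∃ k, f k ≠ f (k + 1) := by
  by_contra! hconst
  have hperiodic : Function.Periodic f 1 := fun k => (hconst k).symm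
  have hf_eq : f = fun _ => f 0 := funext fun k => by
    simpa using hperiodic.int_mul_eq k
  rw [hf_eq, summable_const_iff, sq_eq_zero_iff] at hf
  exact h0 (hf_eq.trans (funext fun _ => hf))

lemma tsum_mul_int_add_one_lt (hf : Summable fun k => f k ^ 2) (h0 : f ≠ 0) :
    ∑' k, f k * f (k + 1) < ∑' k, f k ^ 2 := by
  obtain ⟨k₀, hk₀⟩ := exists_ne_int_add_one hf h0
  have hf' := summable_sq_int_add_one hf
  have hmean : ∑' k, (f k ^ 2 + f (k + 1) ^ 2) / 2 = ∑' k, f k ^ 2 := by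
    have hshift : ∑' k, f (k + 1) ^ 2 = ∑' k, f k ^ 2 :=
      (Equiv.addRight (1 : ℤ)).tsum_eq fun k => f k ^ 2
    rw [tsum_div_const, hf.tsum_add hf', hshift]
    ring
  rw [← hmean]
  refine Summable.tsum_lt_tsum (i := k₀) (fun k => ?_) ?_ (summable_mul_int_add_one hf)
    ((hf.add hf').div_const 2)
  · nlinarith [two_mul_le_add_sq (f k) (f (k + 1))]
  · have : 0 < (f k₀ - f (k₀ + 1)) ^ 2 := by
      have := sub_ne_zero.2 hk₀
      positivity
    nlinarith

end ShiftedProducts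

lemma abs_re_add_abs_im_le_tsum {ι : Type*} {g : ι → ℂ} {S : ℂ} {c : ι → ℝ}
    (hg : HasSum g S) (hc : Summable c) (hgc : ∀ k, |(g k).re| + |(g k).im| ≤ c k) :
    |S.re| + |S.im| ≤ ∑' k, c k := by
  have hre : Summable fun k => |(g k).re| :=
    hc.of_nonneg_of_le (fun _ => abs_nonneg _) fun k => by linarith [hgc k, abs_nonneg (g k).im]
  have him : Summable fun k => |(g k).im| :=
    hc.of_nonneg_of_le (fun _ => abs_nonneg _) fun k => by linarith [hgc k, abs_nonneg (g k).re]
  calc |S.re| + |S.im| = ‖∑' k, (g k).re‖ + ‖∑' k, (g k).im‖ := by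
        rw [(Complex.hasSum_re hg).tsum_eq, (Complex.hasSum_im hg).tsum_eq]; rfl
    _ ≤ ∑' k, |(g k).re| + ∑' k, |(g k).im| :=
        add_le_add (norm_tsum_le_tsum_norm hre) (norm_tsum_le_tsum_norm him)
    _ = ∑' k, (|(g k).re| + |(g k).im|) := (hre.tsum_add him).symm
    _ ≤ ∑' k, c k := (hre.add him).tsum_le_tsum hgc hc

lemma abs_re_add_abs_im_mul_add_conj_le {b : ℝ} (hb : b = 1 ∨ b = -1) (a : ℂ) :
    |((b : ℂ) * a + conj a).re| + |((b : ℂ) * a + conj a).im| ≤ 2 * ‖a‖ := by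
  rcases hb with rfl | rfl
  · simp only [Complex.ofReal_one, one_mul, Complex.add_re, Complex.add_im, Complex.conj_re,
      Complex.conj_im, add_neg_cancel, abs_zero, add_zero]
    linarith [abs_add_le a.re a.re, Complex.abs_re_le_norm a]
  · simp only [Complex.ofReal_neg, Complex.ofReal_one, neg_one_mul, Complex.add_re,
      Complex.add_im, Complex.neg_re, Complex.neg_im, Complex.conj_re, Complex.conj_im,
      neg_add_cancel, abs_zero, zero_add]
    linarith [abs_add_le (-a.im) (-a.im), abs_neg a.im, Complex.abs_im_le_norm a]

lemma lp.hasSum_norm_sq {ι : Type*} {E : ι → Type*} [∀ i, NormedAddCommGroup (E i)]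
    (x : lp E 2) : HasSum (fun i => ‖x i‖ ^ 2) (‖x‖ ^ 2) := by
  simpa using lp.hasSum_norm (p := 2) (by norm_num) x

lemma hasSum_inner_weighted_shift (b : ℤ → ℝ)
    (A : lp (fun _ : ℤ => ℂ) 2 →L[ℂ] lp (fun _ : ℤ => ℂ) 2)
    (hA : ∀ (x : lp (fun _ : ℤ => ℂ) 2) (i : ℤ), A x i = (b (i - 1) : ℂ) * x (i - 1) + x (i + 1))
    (x : lp (fun _ : ℤ => ℂ) 2) :
    HasSum (fun k => (b k : ℂ) * (conj (x k) * x (k + 1)) + conj (conj (x k) * x (k + 1)))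
      (inner ℂ (A x) x) := by
  set u : ℤ → ℂ := fun k => (b k : ℂ) * (conj (x k) * x (k + 1))
  set v : ℤ → ℂ := fun k => conj (x (k + 1)) * x k
  have hsum : HasSum (fun i => u (i - 1) + v i) (inner ℂ (A x) x) := by
    refine (lp.hasSum_inner (A x) x).congr_fun fun i => ?_
    simp only [u, v, RCLike.inner_apply, hA, map_add, map_mul, Complex.conj_ofReal, sub_add_cancel]
    ring
  have hv : Summable v := by
    refine Summable.of_norm_bounded
      (summable_mul_int_add_one (lp.hasSum_norm_sq x).summable) fun k => ?_
    simp [v, mul_comm]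
  have hu_shift : Summable fun i => u (i - 1) :=
    (hsum.summable.sub hv).congr fun i => add_sub_cancel_right (u (i - 1)) (v i)
  have hu : HasSum u (∑' i, u (i - 1)) := (Equiv.subRight (1 : ℤ)).hasSum_iff.1 hu_shift.hasSum
  have hvalue : ∑' i, u (i - 1) + ∑' i, v i = inner ℂ (A x) x := by
    rw [← hu_shift.tsum_add hv, hsum.tsum_eq]
  rw [← hvalue]
  refine (hu.add hv.hasSum).congr_fun fun k => ?_
  simp only [u, v, map_mul, Complex.conj_conj]
  ring

/-- For any `b ∈ {±1}^ℤ`, the numerical range of `A^b` on `ℓ²(ℤ)` is contained in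
the open square `Δ = {x + iy : |x| + |y| < 2}`. -/
theorem numerical_range_subset_square (b : ℤ → ℝ)
    (hb : ∀ i : ℤ, b i = 1 ∨ b i = -1)
    (A : lp (fun _ : ℤ => ℂ) 2 →L[ℂ] lp (fun _ : ℤ => ℂ) 2)
    (hA : ∀ (x : lp (fun _ : ℤ => ℂ) 2) (i : ℤ),
      (A x : ∀ _ : ℤ, ℂ) i = (b (i - 1) : ℂ) * (x : ∀ _ : ℤ, ℂ) (i - 1)
        + (x : ∀ _ : ℤ, ℂ) (i + 1)) :
    ∀ x : lp (fun _ : ℤ => ℂ) 2, ‖x‖ = 1 →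
      |(inner ℂ (A x) x : ℂ).re| + |(inner ℂ (A x) x : ℂ).im| < 2 := by
  intro x hx
  set r : ℤ → ℝ := fun k => ‖x k‖
  have hr : HasSum (fun k => r k ^ 2) 1 := by simpa [hx] using lp.hasSum_norm_sq x
  have hr0 : r ≠ 0 := by
    rintro hr_zero
    have := hr.unique (by simp [hr_zero] : HasSum (fun k => r k ^ 2) 0)
    norm_num at this
  calc |(inner ℂ (A x) x).re| + |(inner ℂ (A x) x).im|
      ≤ ∑' k, 2 * (r k * r (k + 1)) :=
        abs_re_add_abs_im_le_tsum (hasSum_inner_weighted_shift b A hA x)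
          ((summable_mul_int_add_one hr.summable).mul_left 2) fun k =>
            (abs_re_add_abs_im_mul_add_conj_le (hb k) _).trans_eq (by simp [r])
    _ < 2 * ∑' k, r k ^ 2 := by
        rw [tsum_mul_left]
        gcongr
        exact tsum_mul_int_add_one_lt hr.summable hr0
    _ = 2 := by rw [hr.tsum_eq, mul_one]
end
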